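/- If O ∈ Φ, Z is an L_Φ-bisimulation between I and I', Z(x,x') holds, and a is an individual name, then for every role R of L_Φ: R^I(x, a^I) holds if and only if R^{I'}(x', a^{I'}) holds. -/

import Mathlib

/-- A set of DL-features (subset of {I, O, Q, U, Self}). -/
structure DLFeat where
  hasI : Bool
  hasO : Bool
  hasQ : Bool
  hasU : Bool
  hasSelf : Bool

/-- An interpretation with concept names `CN`, role names `RN`, individual names `IN`
and domain `D`. -/
structure Interp (CN RN IN : Type) (D : Type) where
  cInt : CN → Set D
  rInt : RN → D → D → Prop
  iInt : IN → D

/-- Interpretation of a basic role: a role name, possibly inverted. -/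
def brInt {CN RN IN D : Type} (I : Interp CN RN IN D) (R : RN × Bool) (x y : D) : Prop :=
  if R.2 then I.rInt R.1 y x else I.rInt R.1 x y

mutual
/-- Concepts of the full language (membership in `L_Φ` is a separate predicate). -/
inductive DLConcept (CN RN IN : Type) : Type where
  | atom (A : CN)
  | top
  | bot
  | neg (C : DLConcept CN RN IN)
  | conj (C D : DLConcept CN RN IN)
  | disj (C D : DLConcept CN RN IN)
  | all (R : DLRole CN RN IN) (C : DLConcept CN RN IN)
  | ex (R : DLRole CN RN IN) (C : DLConcept CN RN IN)
  | nom (a : IN)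
  | atLeast (n : ℕ) (r : RN) (inverted : Bool) (C : DLConcept CN RN IN)
  | atMost (n : ℕ) (r : RN) (inverted : Bool) (C : DLConcept CN RN IN)
  | exSelf (r : RN)
/-- Roles of the full language. -/
inductive DLRole (CN RN IN : Type) : Type where
  | name (r : RN)
  | eps
  | comp (R S : DLRole CN RN IN)
  | runion (R S : DLRole CN RN IN)
  | star (R : DLRole CN RN IN)
  | test (C : DLConcept CN RN IN)
  | inv (r : RN)
  | univ
end

mutual
/-- The concept belongs to the language `L_Φ`. -/
def DLConcept.inL {CN RN IN : Type} (Φ : DLFeat) : DLConcept CN RN IN → Prop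
  | .atom _ => True
  | .top => True
  | .bot => True
  | .neg C => C.inL Φ
  | .conj C D => C.inL Φ ∧ D.inL Φ
  | .disj C D => C.inL Φ ∧ D.inL Φ
  | .all R C => R.inL Φ ∧ C.inL Φ
  | .ex R C => R.inL Φ ∧ C.inL Φ
  | .nom _ => Φ.hasO = true
  | .atLeast _ _ b C => Φ.hasQ = true ∧ (b = true → Φ.hasI = true) ∧ C.inL Φ
  | .atMost _ _ b C => Φ.hasQ = true ∧ (b = true → Φ.hasI = true) ∧ C.inL Φ
  | .exSelf _ => Φ.hasSelf = true
/-- The role belongs to the language `L_Φ`. -/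
def DLRole.inL {CN RN IN : Type} (Φ : DLFeat) : DLRole CN RN IN → Prop
  | .name _ => True
  | .eps => True
  | .comp R S => R.inL Φ ∧ S.inL Φ
  | .runion R S => R.inL Φ ∧ S.inL Φ
  | .star R => R.inL Φ
  | .test C => C.inL Φ
  | .inv _ => Φ.hasI = true
  | .univ => Φ.hasU = true
end

mutual
/-- Semantics of concepts. -/
def DLConcept.sem {CN RN IN D : Type} (I : Interp CN RN IN D) : DLConcept CN RN IN → Set D
  | .atom A => I.cInt A
  | .top => Set.univ
  | .bot => ∅
  | .neg C => (DLConcept.sem I C)ᶜ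
  | .conj C C' => DLConcept.sem I C ∩ DLConcept.sem I C'
  | .disj C C' => DLConcept.sem I C ∪ DLConcept.sem I C'
  | .all R C => {x | ∀ y, DLRole.sem I R x y → y ∈ DLConcept.sem I C}
  | .ex R C => {x | ∃ y, DLRole.sem I R x y ∧ y ∈ DLConcept.sem I C}
  | .nom a => {I.iInt a}
  | .atLeast n r b C =>
      {x | (n : Cardinal) ≤ Cardinal.mk {y // brInt I (r, b) x y ∧ y ∈ DLConcept.sem I C}}
  | .atMost n r b C =>
      {x | Cardinal.mk {y // brInt I (r, b) x y ∧ y ∈ DLConcept.sem I C} ≤ (n : Cardinal)}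
  | .exSelf r => {x | I.rInt r x x}
/-- Semantics of roles. -/
def DLRole.sem {CN RN IN D : Type} (I : Interp CN RN IN D) : DLRole CN RN IN → D → D → Prop
  | .name r => I.rInt r
  | .eps => Eq
  | .comp R S => Relation.Comp (DLRole.sem I R) (DLRole.sem I S)
  | .runion R S => fun x y => DLRole.sem I R x y ∨ DLRole.sem I S x y
  | .star R => Relation.ReflTransGen (DLRole.sem I R)
  | .test C => fun x y => x = y ∧ x ∈ DLConcept.sem I C
  | .inv r => fun x y => I.rInt r y x
  | .univ => fun _ _ => True
end

/-- `Z` is an `L_Φ`-bisimulation between `I` and `I'`. -/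
def Bisim {CN RN IN D D' : Type} (Φ : DLFeat) (I : Interp CN RN IN D)
    (I' : Interp CN RN IN D') (Z : D → D' → Prop) : Prop :=
  (∀ a : IN, Z (I.iInt a) (I'.iInt a)) ∧
  (∀ (A : CN) x x', Z x x' → (x ∈ I.cInt A ↔ x' ∈ I'.cInt A)) ∧
  (∀ (r : RN) x x' y, Z x x' → I.rInt r x y → ∃ y', Z y y' ∧ I'.rInt r x' y') ∧
  (∀ (r : RN) x x' y', Z x x' → I'.rInt r x' y' → ∃ y, Z y y' ∧ I.rInt r x y) ∧
  (Φ.hasI = true →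
    (∀ (r : RN) x x' y, Z x x' → I.rInt r y x → ∃ y', Z y y' ∧ I'.rInt r y' x') ∧
    (∀ (r : RN) x x' y', Z x x' → I'.rInt r y' x' → ∃ y, Z y y' ∧ I.rInt r y x)) ∧
  (Φ.hasO = true → ∀ (a : IN) x x', Z x x' → (x = I.iInt a ↔ x' = I'.iInt a)) ∧
  (Φ.hasQ = true → ∀ (r : RN) x x', Z x x' →
    ∃ h : {y // I.rInt r x y} ≃ {y' // I'.rInt r x' y'}, ∀ y, Z y.1 (h y).1) ∧
  (Φ.hasQ = true → Φ.hasI = true → ∀ (r : RN) x x', Z x x' →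
    ∃ h : {y // I.rInt r y x} ≃ {y' // I'.rInt r y' x'}, ∀ y, Z y.1 (h y).1) ∧
  (Φ.hasU = true → (∀ x, ∃ x', Z x x') ∧ (∀ x', ∃ x, Z x x')) ∧
  (Φ.hasSelf = true → ∀ (r : RN) x x', Z x x' → (I.rInt r x x ↔ I'.rInt r x' x'))

/-- One step along a basic role (role name, or inverse of a role name if `I ∈ Φ`). -/
def basicStep {CN RN IN D : Type} (Φ : DLFeat) (I : Interp CN RN IN D) (x y : D) : Prop :=
  ∃ r : RN, I.rInt r x y ∨ (Φ.hasI = true ∧ I.rInt r y x)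

/-- `I` is unreachable-objects-free: every element is reachable from some named
individual via a finite path of basic-role edges. -/
def UOF {CN RN IN D : Type} (Φ : DLFeat) (I : Interp CN RN IN D) : Prop :=
  ∀ x : D, ∃ a : IN, Relation.ReflTransGen (basicStep Φ I) (I.iInt a) x

/-- `I` validates the GCI `C ⊑ C'`. -/
def satGCI {CN RN IN D : Type} (I : Interp CN RN IN D) (C C' : DLConcept CN RN IN) : Prop :=
  DLConcept.sem I C ⊆ DLConcept.sem I C'

/-- `I` is a model of the TBox `T`. -/
def modelsTBox {CN RN IN D : Type} (I : Interp CN RN IN D)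
    (T : Set (DLConcept CN RN IN × DLConcept CN RN IN)) : Prop :=
  ∀ p ∈ T, satGCI I p.1 p.2

/-- Individual assertions. -/
inductive Assertion (CN RN IN : Type) : Type where
  | conc (C : DLConcept CN RN IN) (a : IN)
  | rolePos (R : DLRole CN RN IN) (a b : IN)
  | roleNeg (R : DLRole CN RN IN) (a b : IN)
  | eq (a b : IN)
  | neq (a b : IN)

/-- The assertion belongs to `L_Φ`. -/
def Assertion.inL {CN RN IN : Type} (Φ : DLFeat) : Assertion CN RN IN → Prop
  | .conc C _ => C.inL Φ
  | .rolePos R _ _ => R.inL Φ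
  | .roleNeg R _ _ => R.inL Φ
  | .eq _ _ => True
  | .neq _ _ => True

/-- `I` satisfies the individual assertion. -/
def Assertion.sat {CN RN IN D : Type} (I : Interp CN RN IN D) : Assertion CN RN IN → Prop
  | .conc C a => I.iInt a ∈ DLConcept.sem I C
  | .rolePos R a b => DLRole.sem I R (I.iInt a) (I.iInt b)
  | .roleNeg R a b => ¬ DLRole.sem I R (I.iInt a) (I.iInt b)
  | .eq a b => I.iInt a = I.iInt b
  | .neq a b => I.iInt a ≠ I.iInt b

/-- `I` is a model of the ABox `A`. -/
def modelsABox {CN RN IN D : Type} (I : Interp CN RN IN D) (A : Set (Assertion CN RN IN)) : Prop :=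
  ∀ φ ∈ A, φ.sat I

/-- A role axiom `R₁ ∘ … ∘ R_k ⊑ r` (`ε ⊑ r` when the list is empty), the `R_i` basic roles. -/
structure RoleAx (RN : Type) where
  lhs : List (RN × Bool)
  rhs : RN

/-- The role axiom is in `L_Φ` (inverse basic roles only if `I ∈ Φ`). -/
def RoleAx.inL {RN : Type} (Φ : DLFeat) (ax : RoleAx RN) : Prop :=
  ∀ p ∈ ax.lhs, p.2 = true → Φ.hasI = true

/-- Interpretation of a composition chain of basic roles (`ε` for the empty chain). -/
def chainInt {CN RN IN D : Type} (I : Interp CN RN IN D) : List (RN × Bool) → D → D → Prop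
  | [] => Eq
  | R :: l => fun x z => ∃ y, brInt I R x y ∧ chainInt I l y z

/-- `I` validates the role axiom. -/
def satRoleAx {CN RN IN D : Type} (I : Interp CN RN IN D) (ax : RoleAx RN) : Prop :=
  ∀ x y, chainInt I ax.lhs x y → I.rInt ax.rhs x y

/-- `I` is a model of the RBox `R`. -/
def modelsRBox {CN RN IN D : Type} (I : Interp CN RN IN D) (R : Set (RoleAx RN)) : Prop :=
  ∀ ax ∈ R, satRoleAx I ax

/-- `I'` is an r-extension of `I`. -/
def RExt {CN RN IN D : Type} (I I' : Interp CN RN IN D) : Prop :=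
  I'.cInt = I.cInt ∧ I'.iInt = I.iInt ∧ ∀ (r : RN) x y, I.rInt r x y → I'.rInt r x y

/-- `I'` is the least r-extension of `I` validating the RBox `R`. -/
def LeastRExt {CN RN IN D : Type} (I : Interp CN RN IN D) (R : Set (RoleAx RN))
    (I' : Interp CN RN IN D) : Prop :=
  RExt I I' ∧ modelsRBox I' R ∧
    ∀ I'' : Interp CN RN IN D, RExt I I'' → modelsRBox I'' R →
      ∀ (r : RN) x y, I'.rInt r x y → I''.rInt r x y

/-- `I` is finitely branching w.r.t. `L_Φ`. -/
def FinBranch {CN RN IN D : Type} (Φ : DLFeat) (I : Interp CN RN IN D) : Prop :=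
  ∀ (r : RN) (x : D), {y | I.rInt r x y}.Finite ∧ (Φ.hasI = true → {y | I.rInt r y x}.Finite)

/-- `x` and `x'` are `L_Φ`-equivalent: they satisfy the same concepts of `L_Φ`. -/
def LEquiv {CN RN IN D D' : Type} (Φ : DLFeat) (I : Interp CN RN IN D)
    (I' : Interp CN RN IN D') (x : D) (x' : D') : Prop :=
  ∀ C : DLConcept CN RN IN, C.inL Φ → (x ∈ DLConcept.sem I C ↔ x' ∈ DLConcept.sem I' C)

/-- The largest `L_Φ`-auto-bisimulation of `I` (union of all auto-bisimulations). -/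
def gbisim {CN RN IN D : Type} (Φ : DLFeat) (I : Interp CN RN IN D) (x y : D) : Prop :=
  ∃ Z, Bisim Φ I I Z ∧ Z x y

/-- The quotient interpretation of `I` w.r.t. the largest `L_Φ`-auto-bisimulation. -/
def quotInterp {CN RN IN D : Type} (Φ : DLFeat) (I : Interp CN RN IN D) :
    Interp CN RN IN (Quot (gbisim Φ I)) where
  cInt A := {q | ∃ x, Quot.mk _ x = q ∧ x ∈ I.cInt A}
  rInt r q q' := ∃ x y, Quot.mk _ x = q ∧ Quot.mk _ y = q' ∧ I.rInt r x y
  iInt a := Quot.mk _ (I.iInt a)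

/-- A QS-interpretation: an interpretation together with multiplicity functions for
basic roles and self-loop sets for role names. -/
structure QSInterp (CN RN IN D : Type) where
  toInterp : Interp CN RN IN D
  QU : (RN × Bool) → D → D → ℕ
  SE : RN → Set D

/-- The defining positivity condition of QS-interpretations:
`QU R x y > 0` iff `R` connects `x` to `y`. -/
def QSInterp.Proper {CN RN IN D : Type} (J : QSInterp CN RN IN D) : Prop :=
  ∀ (R : RN × Bool) x y, 0 < J.QU R x y ↔ brInt J.toInterp R x y

/-- `Σ {f y : y ∈ S}` as an extended natural number. -/
noncomputable def qsum {D : Type} (f : D → ℕ) (S : Set D) : ℕ∞ :=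
  ⨆ (s : Finset D) (_ : ↑s ⊆ S), (∑ y ∈ s, f y : ℕ∞)

mutual
/-- Semantics of concepts in a QS-interpretation. -/
noncomputable def DLConcept.qsem {CN RN IN D : Type} (J : QSInterp CN RN IN D) :
    DLConcept CN RN IN → Set D
  | .atom A => J.toInterp.cInt A
  | .top => Set.univ
  | .bot => ∅
  | .neg C => (DLConcept.qsem J C)ᶜ
  | .conj C C' => DLConcept.qsem J C ∩ DLConcept.qsem J C'
  | .disj C C' => DLConcept.qsem J C ∪ DLConcept.qsem J C'
  | .all R C => {x | ∀ y, DLRole.qsem J R x y → y ∈ DLConcept.qsem J C}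
  | .ex R C => {x | ∃ y, DLRole.qsem J R x y ∧ y ∈ DLConcept.qsem J C}
  | .nom a => {J.toInterp.iInt a}
  | .atLeast n r b C => {x | (n : ℕ∞) ≤ qsum (J.QU (r, b) x) (DLConcept.qsem J C)}
  | .atMost n r b C => {x | qsum (J.QU (r, b) x) (DLConcept.qsem J C) ≤ (n : ℕ∞)}
  | .exSelf r => J.SE r
/-- Semantics of roles in a QS-interpretation. -/
noncomputable def DLRole.qsem {CN RN IN D : Type} (J : QSInterp CN RN IN D) :
    DLRole CN RN IN → D → D → Prop
  | .name r => J.toInterp.rInt r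
  | .eps => Eq
  | .comp R S => Relation.Comp (DLRole.qsem J R) (DLRole.qsem J S)
  | .runion R S => fun x y => DLRole.qsem J R x y ∨ DLRole.qsem J S x y
  | .star R => Relation.ReflTransGen (DLRole.qsem J R)
  | .test C => fun x y => x = y ∧ x ∈ DLConcept.qsem J C
  | .inv r => fun x y => J.toInterp.rInt r y x
  | .univ => fun _ _ => True
end

/-- The quotient QS-interpretation of a traditional interpretation `I` w.r.t. the
largest `L_Φ`-auto-bisimulation. -/
noncomputable def qsQuot {CN RN IN D : Type} (Φ : DLFeat) (I : Interp CN RN IN D) :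
    QSInterp CN RN IN (Quot (gbisim Φ I)) where
  toInterp := quotInterp Φ I
  QU R q q' := sSup {n | ∃ x, Quot.mk _ x = q ∧
    n = Set.ncard {y | Quot.mk (gbisim Φ I) y = q' ∧ brInt I R x y}}
  SE r := {q | ∃ x, Quot.mk _ x = q ∧ I.rInt r x x}

/-! The zig condition of `Z` (`IsSimulation`) lifts from role names to every role of `L_Φ`,
constructor by constructor; the test case needs invariance of concepts, which in turn needs the
zig and zag conditions for roles, so both are proved in one induction. The zag condition is the
zig condition of the converse bisimulation. An `R`-edge from `x` to `a^I` is thus matched by an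
`R`-edge from `x'` to some `y'` with `Z(a^I, y')`, and the nominal condition forces
`y' = a^{I'}`. -/

def IsSimulation {α β : Type*} (Z : α → β → Prop) (r : α → α → Prop) (r' : β → β → Prop) :
    Prop :=
  ∀ ⦃x x' y⦄, Z x x' → r x y → ∃ y', Z y y' ∧ r' x' y'

namespace IsSimulation

variable {α β : Type*} {Z : α → β → Prop} {r s : α → α → Prop} {r' s' : β → β → Prop}

theorem eq : IsSimulation Z Eq Eq := by
  rintro x x' _ hZ rfl
  exact ⟨x', hZ, rfl⟩

theorem test {p : α → Prop} {p' : β → Prop} (hp : ∀ ⦃x x'⦄, Z x x' → (p x ↔ p' x')) :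
    IsSimulation Z (fun x y => x = y ∧ p x) (fun x' y' => x' = y' ∧ p' x') := by
  rintro x x' _ hZ ⟨rfl, hx⟩
  exact ⟨x', hZ, rfl, (hp hZ).mp hx⟩

theorem comp (hr : IsSimulation Z r r') (hs : IsSimulation Z s s') :
    IsSimulation Z (Relation.Comp r s) (Relation.Comp r' s') := by
  rintro x x' y hZ ⟨z, hxz, hzy⟩
  obtain ⟨z', hZz, hxz'⟩ := hr hZ hxz
  obtain ⟨y', hZy, hzy'⟩ := hs hZz hzy
  exact ⟨y', hZy, z', hxz', hzy'⟩

theorem or (hr : IsSimulation Z r r') (hs : IsSimulation Z s s') :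
    IsSimulation Z (fun x y => r x y ∨ s x y) (fun x' y' => r' x' y' ∨ s' x' y') := by
  rintro x x' y hZ (hxy | hxy)
  · exact (hr hZ hxy).imp fun _ => And.imp_right Or.inl
  · exact (hs hZ hxy).imp fun _ => And.imp_right Or.inr

theorem reflTransGen (hr : IsSimulation Z r r') :
    IsSimulation Z (Relation.ReflTransGen r) (Relation.ReflTransGen r') := by
  intro x x' y hZ hxy
  induction hxy using Relation.ReflTransGen.head_induction_on generalizing x' with
  | refl => exact ⟨x', hZ, .refl⟩
  | head hxz _ ih =>
    obtain ⟨z', hZz, hxz'⟩ := hr hZ hxz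
    obtain ⟨y', hZy, hzy'⟩ := ih hZz
    exact ⟨y', hZy, hzy'.head hxz'⟩

end IsSimulation

theorem Cardinal.mk_subtype_and_eq_of_equiv {α β : Type} {p q : α → Prop} {p' q' : β → Prop}
    (e : {a // p a} ≃ {b // p' b}) (he : ∀ a, q a.1 ↔ q' (e a).1) :
    Cardinal.mk {a // p a ∧ q a} = Cardinal.mk {b // p' b ∧ q' b} :=
  Cardinal.mk_congr <| (Equiv.subtypeSubtypeEquivSubtypeInter p q).symm.trans <|
    (e.subtypeEquiv he).trans (Equiv.subtypeSubtypeEquivSubtypeInter p' q')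

namespace Bisim

variable {CN RN IN D D' : Type} {Φ : DLFeat} {I : Interp CN RN IN D} {I' : Interp CN RN IN D'}
  {Z : D → D' → Prop}

theorem symm (h : Bisim Φ I I' Z) : Bisim Φ I' I (flip Z) := by
  obtain ⟨hInit, hAtom, hForth, hBack, hInv, hNom, hQ, hQInv, hU, hSelf⟩ := h
  refine ⟨hInit, fun A x' x hZ => (hAtom A x x' hZ).symm, fun r x' x y' hZ => hBack r x x' y' hZ,
    fun r x' x y hZ => hForth r x x' y hZ,
    fun hI => ⟨fun r x' x y' hZ => (hInv hI).2 r x x' y' hZ,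
      fun r x' x y hZ => (hInv hI).1 r x x' y hZ⟩,
    fun hO a x' x hZ => (hNom hO a x x' hZ).symm, fun hq r x' x hZ => ?_,
    fun hq hI r x' x hZ => ?_, fun hu => (hU hu).symm,
    fun hs r x' x hZ => (hSelf hs r x x' hZ).symm⟩
  · obtain ⟨e, he⟩ := hQ hq r x x' hZ
    exact ⟨e.symm, fun y' => by simpa [flip] using he (e.symm y')⟩
  · obtain ⟨e, he⟩ := hQInv hq hI r x x' hZ
    exact ⟨e.symm, fun y' => by simpa [flip] using he (e.symm y')⟩

theorem mem_cInt_iff (h : Bisim Φ I I' Z) (A : CN) {x : D} {x' : D'} (hZ : Z x x') :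
    x ∈ I.cInt A ↔ x' ∈ I'.cInt A :=
  h.2.1 A x x' hZ

theorem isSimulation_rInt (h : Bisim Φ I I' Z) (r : RN) :
    IsSimulation Z (I.rInt r) (I'.rInt r) :=
  h.2.2.1 r

theorem isSimulation_rInt_inv (h : Bisim Φ I I' Z) (hI : Φ.hasI = true) (r : RN) :
    IsSimulation Z (fun x y => I.rInt r y x) (fun x' y' => I'.rInt r y' x') :=
  (h.2.2.2.2.1 hI).1 r

theorem eq_iInt_iff (h : Bisim Φ I I' Z) (hO : Φ.hasO = true) (a : IN) {x : D} {x' : D'}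
    (hZ : Z x x') : x = I.iInt a ↔ x' = I'.iInt a :=
  h.2.2.2.2.2.1 hO a x x' hZ

theorem exists_brInt_equiv (h : Bisim Φ I I' Z) (hQ : Φ.hasQ = true) (r : RN) {b : Bool}
    (hb : b = true → Φ.hasI = true) {x : D} {x' : D'} (hZ : Z x x') :
    ∃ e : {y // brInt I (r, b) x y} ≃ {y' // brInt I' (r, b) x' y'}, ∀ y, Z y.1 (e y).1 := by
  cases b
  · exact h.2.2.2.2.2.2.1 hQ r x x' hZ
  · exact h.2.2.2.2.2.2.2.1 hQ (hb rfl) r x x' hZ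

theorem exists_rel (h : Bisim Φ I I' Z) (hU : Φ.hasU = true) (x : D) : ∃ x', Z x x' :=
  (h.2.2.2.2.2.2.2.2.1 hU).1 x

theorem rInt_self_iff (h : Bisim Φ I I' Z) (hS : Φ.hasSelf = true) (r : RN) {x : D} {x' : D'}
    (hZ : Z x x') : I.rInt r x x ↔ I'.rInt r x' x' :=
  h.2.2.2.2.2.2.2.2.2 hS r x x' hZ

mutual

theorem mem_sem_iff {CN RN IN D D' : Type} {Φ : DLFeat} {I : Interp CN RN IN D}
    {I' : Interp CN RN IN D'} {Z : D → D' → Prop} (h : Bisim Φ I I' Z) (C : DLConcept CN RN IN)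
    (hC : C.inL Φ) {x : D} {x' : D'} (hZ : Z x x') :
    x ∈ DLConcept.sem I C ↔ x' ∈ DLConcept.sem I' C := by
  match C with
  | .atom A => exact h.mem_cInt_iff A hZ
  | .top | .bot => rfl
  | .neg C => exact not_congr (mem_sem_iff h C hC hZ)
  | .conj C C' => exact and_congr (mem_sem_iff h C hC.1 hZ) (mem_sem_iff h C' hC.2 hZ)
  | .disj C C' => exact or_congr (mem_sem_iff h C hC.1 hZ) (mem_sem_iff h C' hC.2 hZ)
  | .all R C =>
    constructor
    · intro hx y' hxy'
      obtain ⟨y, hZy, hxy⟩ := isSimulation_sem h.symm R hC.1 hZ hxy'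
      exact (mem_sem_iff h C hC.2 hZy).mp (hx y hxy)
    · intro hx' y hxy
      obtain ⟨y', hZy, hxy'⟩ := isSimulation_sem h R hC.1 hZ hxy
      exact (mem_sem_iff h C hC.2 hZy).mpr (hx' y' hxy')
  | .ex R C =>
    constructor
    · rintro ⟨y, hxy, hy⟩
      obtain ⟨y', hZy, hxy'⟩ := isSimulation_sem h R hC.1 hZ hxy
      exact ⟨y', hxy', (mem_sem_iff h C hC.2 hZy).mp hy⟩
    · rintro ⟨y', hxy', hy'⟩
      obtain ⟨y, hZy, hxy⟩ := isSimulation_sem h.symm R hC.1 hZ hxy'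
      exact ⟨y, hxy, (mem_sem_iff h C hC.2 hZy).mpr hy'⟩
  | .nom a => exact h.eq_iInt_iff hC a hZ
  | .atLeast n r b C | .atMost n r b C =>
    obtain ⟨e, he⟩ := h.exists_brInt_equiv hC.1 r hC.2.1 hZ
    have hcard := Cardinal.mk_subtype_and_eq_of_equiv e fun y => mem_sem_iff h C hC.2.2 (he y)
    simp only [DLConcept.sem, Set.mem_ofPred_eq, hcard]
  | .exSelf r => exact h.rInt_self_iff hC r hZ

theorem isSimulation_sem {CN RN IN D D' : Type} {Φ : DLFeat} {I : Interp CN RN IN D}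
    {I' : Interp CN RN IN D'} {Z : D → D' → Prop} (h : Bisim Φ I I' Z) (R : DLRole CN RN IN)
    (hR : R.inL Φ) : IsSimulation Z (DLRole.sem I R) (DLRole.sem I' R) := by
  match R with
  | .name r => exact h.isSimulation_rInt r
  | .eps => exact .eq
  | .comp R S => exact (isSimulation_sem h R hR.1).comp (isSimulation_sem h S hR.2)
  | .runion R S => exact (isSimulation_sem h R hR.1).or (isSimulation_sem h S hR.2)
  | .star R => exact (isSimulation_sem h R hR).reflTransGen
  | .test C => exact .test fun _ _ hZ => mem_sem_iff h C hR hZ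
  | .inv r => exact h.isSimulation_rInt_inv hR r
  | .univ => exact fun _ _ y _ _ => (h.exists_rel hR y).imp fun _ hZy => ⟨hZy, trivial⟩

end

theorem sem_iInt_of_sem_iInt (h : Bisim Φ I I' Z) (hO : Φ.hasO = true) {R : DLRole CN RN IN}
    (hR : R.inL Φ) {x : D} {x' : D'} (hZ : Z x x') (a : IN)
    (hxa : DLRole.sem I R x (I.iInt a)) : DLRole.sem I' R x' (I'.iInt a) := by
  obtain ⟨y', hZy, hxy'⟩ := h.isSimulation_sem R hR hZ hxa
  rwa [← (h.eq_iInt_iff hO a hZy).mp rfl]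

end Bisim

/-- If `O ∈ Φ`, bisimilar points have the same `R`-edges into any named
individual, for every role `R` of `L_Φ`. -/
theorem role_to_nominal_invariance {CN RN IN D D' : Type} (Φ : DLFeat)
    (hO : Φ.hasO = true) (I : Interp CN RN IN D) (I' : Interp CN RN IN D')
    (Z : D → D' → Prop) (h : Bisim Φ I I' Z) (x : D) (x' : D') (hZ : Z x x')
    (a : IN) (R : DLRole CN RN IN) (hR : R.inL Φ) :
    DLRole.sem I R x (I.iInt a) ↔ DLRole.sem I' R x' (I'.iInt a) :=
  ⟨h.sem_iInt_of_sem_iInt hO hR hZ a, h.symm.sem_iInt_of_sem_iInt hO hR hZ a⟩
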